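/- Let v : ℝ² → ℝ be smooth, compactly supported and real-valued with F[v](0) = ∫_{ℝ²} v(x) dx > 0, and let q ≥ 1 be an integer. Then there exist constants c_q > 0 and K > 0 such that for every k_F ≥ K, ∫_{{k ∈ ℝ² : |k| ≤ k_F}} ∫_{{l ∈ ℝ² : |l| ≥ k_F}} |F[v](k − l)|^q dl dk ≥ c_q · k_F. (This is the lower bound in equation (2.37): the fluctuations of the potential around its mean grow proportionally to ρ^{1/2}.) -/

import Mathlib

open MeasureTheory Real

open FourierTransform RealInnerProductSpace Metric in
private noncomputable def mySchwartz (v : EuclideanSpace ℝ (Fin 2) → ℝ)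
    (hv : ContDiff ℝ (⊤ : ℕ∞) v) (hsupp : HasCompactSupport v) :
    SchwartzMap (EuclideanSpace ℝ (Fin 2)) ℂ where
  toFun x := (v x : ℂ)
  smooth' := Complex.ofRealCLM.contDiff.comp (hv.of_le (by simp))
  decay' := by
    intro k n
    have hw : ContDiff ℝ (⊤ : ℕ∞) (fun x : EuclideanSpace ℝ (Fin 2) => (v x : ℂ)) :=
      Complex.ofRealCLM.contDiff.comp (hv.of_le (by simp))
    have hws : HasCompactSupport (fun x : EuclideanSpace ℝ (Fin 2) => (v x : ℂ)) :=
      hsupp.comp_left Complex.ofReal_zero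
    have h1 := (hws.iteratedFDeriv (𝕜 := ℝ) n).norm
    have hcont : Continuous fun x : EuclideanSpace ℝ (Fin 2) =>
        ‖x‖ ^ k * ‖iteratedFDeriv ℝ n (fun x => (v x : ℂ)) x‖ :=
      ((continuous_norm.pow k)).mul (hw.continuous_iteratedFDeriv (by exact_mod_cast le_top)).norm
    have hcs : HasCompactSupport fun x : EuclideanSpace ℝ (Fin 2) =>
        ‖x‖ ^ k * ‖iteratedFDeriv ℝ n (fun x => (v x : ℂ)) x‖ := h1.mul_left
    obtain ⟨C, hC⟩ := hcont.bounded_above_of_compact_support hcs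
    exact ⟨C, fun x => by simpa using hC x⟩

/-- The Fourier transform `F[v](ξ) = ∫_{ℝ²} v(x) e^{−i ξ·x} dx`. -/
noncomputable def fourierTransform2 (v : EuclideanSpace ℝ (Fin 2) → ℝ)
    (ξ : EuclideanSpace ℝ (Fin 2)) : ℂ :=
  ∫ x, Complex.exp (-(Complex.I * ((inner ℝ ξ x : ℝ) : ℂ))) * (v x : ℂ)

open FourierTransform RealInnerProductSpace in
private lemma fourierTransform2_eq (v : EuclideanSpace ℝ (Fin 2) → ℝ)
    (ξ : EuclideanSpace ℝ (Fin 2)) :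
    fourierTransform2 v ξ = 𝓕 (fun x => (v x : ℂ)) (((2 * π)⁻¹ : ℝ) • ξ) := by
  rw [Real.fourier_eq']
  unfold fourierTransform2
  refine integral_congr_ae (Filter.Eventually.of_forall fun x => ?_)
  simp only [smul_eq_mul]
  congr 1
  rw [real_inner_smul_right]
  rw [show -2 * π * ((2*π)⁻¹ * ⟪x,ξ⟫) = -⟪x,ξ⟫ by field_simp, real_inner_comm x ξ]
  push_cast
  ring

set_option maxHeartbeats 1000000 in
/-- Lower bound in (2.37): for smooth compactly supported real-valued `v` with
`F[v](0) = ∫ v > 0` and `q ≥ 1`, the fluctuation integral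
`∫_{|k| ≤ k_F} ∫_{|l| ≥ k_F} |F[v](k−l)|^q dl dk` is at least `c_q · k_F`
for all sufficiently large `k_F`. -/
theorem fluctuation_integral_lower_bound
    (v : EuclideanSpace ℝ (Fin 2) → ℝ) (hv : ContDiff ℝ (⊤ : ℕ∞) v)
    (hsupp : HasCompactSupport v) (hpos : 0 < ∫ x, v x)
    (q : ℕ) (hq : 1 ≤ q) :
    ∃ c : ℝ, 0 < c ∧ ∃ K : ℝ, 0 < K ∧ ∀ kF : ℝ, K ≤ kF →
      c * kF ≤
      ∫ k in {k : EuclideanSpace ℝ (Fin 2) | ‖k‖ ≤ kF},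
        ∫ l in {l : EuclideanSpace ℝ (Fin 2) | kF ≤ ‖l‖},
          ‖fourierTransform2 v (k - l)‖ ^ q := by
  classical
  set W : SchwartzMap (EuclideanSpace ℝ (Fin 2)) ℂ := mySchwartz v hv hsupp with hW
  set G : SchwartzMap (EuclideanSpace ℝ (Fin 2)) ℂ := SchwartzMap.fourierTransformCLM ℝ W with hG
  set F : (EuclideanSpace ℝ (Fin 2)) → ℂ := fourierTransform2 v with hF
  have hFG : ∀ ξ, F ξ = G (((2 * π)⁻¹ : ℝ) • ξ) := fun ξ => fourierTransform2_eq v ξ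
  have hGcont : Continuous G := G.continuous
  have hFcont : Continuous F := by
    have : F = fun ξ => G (((2 * π)⁻¹ : ℝ) • ξ) := funext hFG
    rw [this]
    exact hGcont.comp (continuous_const_smul _)
  -- value at 0
  have hF0 : F 0 = ((∫ x, v x : ℝ) : ℂ) := by
    rw [hF]
    unfold fourierTransform2
    simp only [inner_zero_left, Complex.ofReal_zero, mul_zero, neg_zero, Complex.exp_zero, one_mul]
    exact integral_ofReal
  have hεpos : (0:ℝ) < ‖F 0‖ / 2 := by
    rw [hF0]
    simp only [Complex.norm_real, Real.norm_eq_abs]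
    rw [abs_of_pos hpos]
    linarith
  set ε : ℝ := ‖F 0‖ / 2 with hε
  -- continuity at 0 gives a neighborhood where ‖F‖ ≥ ε
  obtain ⟨δ, hδpos, hδ⟩ := Metric.continuousAt_iff.mp hFcont.continuousAt ε hεpos
  have hlow : ∀ ξ : (EuclideanSpace ℝ (Fin 2)), ‖ξ‖ ≤ δ / 2 → ε ≤ ‖F ξ‖ := by
    intro ξ hξ
    have h1 : dist (F ξ) (F 0) < ε := by
      apply hδ
      rw [dist_zero_right]
      linarith
    rw [dist_eq_norm] at h1
    have h2 : ‖F 0 - F ξ‖ < ε := by rwa [norm_sub_rev]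
    have h3 : ‖F 0‖ - ‖F ξ‖ < ε := lt_of_le_of_lt (norm_sub_norm_le _ _) h2
    rw [hε] at *
    linarith
  set r : ℝ := δ / 8 with hr
  have hrpos : 0 < r := by rw [hr]; linarith
  -- integrability of ‖F ·‖^q
  obtain ⟨M, hM⟩ := G.decay' 0 0
  set M' : ℝ := max M 1 with hM'
  have hGbdd : ∀ ξ, ‖G ξ‖ ≤ M' := by
    intro ξ
    have := hM ξ
    simp only [pow_zero, one_mul, norm_iteratedFDeriv_zero] at this
    exact this.trans (le_max_left _ _)
  have hM'pos : (0:ℝ) < M' := lt_of_lt_of_le one_pos (le_max_right _ _)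
  have hGq : Integrable (fun ξ : (EuclideanSpace ℝ (Fin 2)) => ‖G ξ‖ ^ q) := by
    refine (G.integrable.norm.const_mul (M' ^ (q - 1))).mono'
      ((hGcont.norm.pow q).aestronglyMeasurable) (Filter.Eventually.of_forall fun ξ => ?_)
    have hb : ‖G ξ‖ ≤ M' := hGbdd ξ
    have h0 : (0:ℝ) ≤ ‖G ξ‖ := norm_nonneg _
    calc ‖‖G ξ‖ ^ q‖ = ‖G ξ‖ ^ q := by
          rw [Real.norm_eq_abs, abs_of_nonneg (pow_nonneg h0 q)]
      _ = ‖G ξ‖ ^ (q - 1) * ‖G ξ‖ := by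
          rw [← pow_succ, Nat.sub_add_cancel hq]
      _ ≤ M' ^ (q - 1) * ‖G ξ‖ := by
          gcongr
  have hHq : Integrable (fun y : (EuclideanSpace ℝ (Fin 2)) => ‖F y‖ ^ q) := by
    have heq : (fun y : (EuclideanSpace ℝ (Fin 2)) => ‖F y‖ ^ q)
        = fun y : (EuclideanSpace ℝ (Fin 2)) => (fun ξ : (EuclideanSpace ℝ (Fin 2)) => ‖G ξ‖ ^ q) (((2 * π)⁻¹ : ℝ) • y) := by
      funext y; rw [hFG]
    rw [heq]
    exact (integrable_comp_smul_iff volume (fun ξ : (EuclideanSpace ℝ (Fin 2)) => ‖G ξ‖ ^ q)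
      (inv_ne_zero (by positivity : (2 * π : ℝ) ≠ 0))).mpr hGq
  set Ih : ℝ := ∫ y : (EuclideanSpace ℝ (Fin 2)), ‖F y‖ ^ q with hIh
  -- volume constants
  set V : ℝ := (volume (Metric.ball (0 : (EuclideanSpace ℝ (Fin 2))) 1)).toReal with hV
  have hVpos : 0 < V := ENNReal.toReal_pos (Metric.measure_ball_pos volume _ one_pos).ne'
    measure_ball_lt_top.ne
  set Vb : ℝ := (volume (Metric.ball (0 : (EuclideanSpace ℝ (Fin 2))) r)).toReal with hVb
  have hVbpos : 0 < Vb := ENNReal.toReal_pos (Metric.measure_ball_pos volume _ hrpos).ne'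
    measure_ball_lt_top.ne
  refine ⟨ε ^ q * Vb * (r * V), by positivity, 1 + r, by positivity, fun kF hkF => ?_⟩
  have hkF1 : 1 + r ≤ kF := hkF
  have hkFpos : 0 < kF := by linarith
  -- the sets
  set S : Set (EuclideanSpace ℝ (Fin 2)) := {l : (EuclideanSpace ℝ (Fin 2)) | kF ≤ ‖l‖} with hS
  have hSmeas : MeasurableSet S := (isClosed_le continuous_const continuous_norm).measurableSet
  set A : Set (EuclideanSpace ℝ (Fin 2)) := Metric.closedBall (0 : (EuclideanSpace ℝ (Fin 2))) kF \ Metric.ball (0 : (EuclideanSpace ℝ (Fin 2))) (kF - r) with hA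
  have hAmeas : MeasurableSet A := measurableSet_closedBall.diff measurableSet_ball
  have hAfin : volume A ≠ ⊤ :=
    ((measure_mono Set.diff_subset).trans_lt measure_closedBall_lt_top).ne
  -- inner bound
  have key : ∀ k ∈ A, ε ^ q * Vb ≤ ∫ l in S, ‖F (k - l)‖ ^ q := by
    intro k hk
    obtain ⟨hk1, hk2⟩ := hk
    rw [Metric.mem_closedBall, dist_zero_right] at hk1
    rw [Metric.mem_ball, dist_zero_right] at hk2
    push_neg at hk2
    have hknorm : 0 < ‖k‖ := by linarith
    set l₀ : (EuclideanSpace ℝ (Fin 2)) := ((‖k‖ + 2 * r) / ‖k‖) • k with hl₀def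
    have hl₀ : ‖l₀‖ = ‖k‖ + 2 * r := by
      rw [hl₀def, norm_smul, Real.norm_eq_abs,
        abs_of_pos (by positivity : (0:ℝ) < (‖k‖ + 2 * r) / ‖k‖)]
      field_simp
    have hl₀k : ‖l₀ - k‖ = 2 * r := by
      have : l₀ - k = (2 * r / ‖k‖) • k := by
        rw [hl₀def]
        rw [show (2 * r / ‖k‖ : ℝ) = (‖k‖ + 2 * r) / ‖k‖ - 1 by field_simp; ring]
        rw [sub_smul, one_smul]
      rw [this, norm_smul, Real.norm_eq_abs,
        abs_of_pos (by positivity : (0:ℝ) < 2 * r / ‖k‖)]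
      field_simp
    have hball_sub : Metric.ball l₀ r ⊆ S := by
      intro l hl
      rw [Metric.mem_ball, dist_eq_norm] at hl
      have h4 : ‖l₀‖ - ‖l‖ ≤ ‖l₀ - l‖ := norm_sub_norm_le _ _
      rw [norm_sub_rev] at h4
      rw [hS, Set.mem_setOf_eq]
      have := hl₀
      linarith [hl, h4]
    have hFlow : ∀ l ∈ Metric.ball l₀ r, ε ^ q ≤ ‖F (k - l)‖ ^ q := by
      intro l hl
      rw [Metric.mem_ball, dist_eq_norm] at hl
      have h6 : ‖k - l‖ ≤ δ / 2 := by
        have h7 : ‖k - l‖ ≤ ‖k - l₀‖ + ‖l₀ - l‖ := by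
          have := norm_add_le (k - l₀) (l₀ - l)
          simpa using this
        have h8 : ‖k - l₀‖ = 2 * r := by rw [norm_sub_rev]; exact hl₀k
        have h8' : ‖l₀ - l‖ < r := by rw [norm_sub_rev]; exact hl
        have hr8 : r = δ / 8 := hr
        linarith
      exact pow_le_pow_left₀ hεpos.le (hlow _ h6) q
    have hintk : Integrable (fun l : (EuclideanSpace ℝ (Fin 2)) => ‖F (k - l)‖ ^ q) := hHq.comp_sub_left k
    calc ε ^ q * Vb
        = ε ^ q * (volume (Metric.ball l₀ r)).toReal := by
          rw [hVb, Measure.addHaar_ball_center volume l₀ r]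
      _ ≤ ∫ l in Metric.ball l₀ r, ‖F (k - l)‖ ^ q := by
          have := setIntegral_ge_of_const_le_real measurableSet_ball measure_ball_lt_top.ne
            (fun l hl => hFlow l hl) hintk.integrableOn
          rwa [measureReal_def] at this
      _ ≤ ∫ l in S, ‖F (k - l)‖ ^ q := by
          apply setIntegral_mono_set hintk.integrableOn
          · exact Filter.Eventually.of_forall fun l => by positivity
          · exact Filter.Eventually.of_forall fun l hl => hball_sub hl
  -- properties of the inner integral as a function of k
  set φ : (EuclideanSpace ℝ (Fin 2)) → ℝ := fun k => ∫ l in S, ‖F (k - l)‖ ^ q with hφ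
  have hφnonneg : ∀ k, 0 ≤ φ k := fun k => integral_nonneg fun l => by positivity
  have hφmeas : StronglyMeasurable φ := by
    have hc : Continuous fun p : (EuclideanSpace ℝ (Fin 2)) × (EuclideanSpace ℝ (Fin 2)) => ‖F (p.1 - p.2)‖ ^ q :=
      ((hFcont.comp (continuous_fst.sub continuous_snd)).norm.pow q)
    exact hc.stronglyMeasurable.integral_prod_right'
  have hφbdd : ∀ k, φ k ≤ Ih := by
    intro k
    rw [hφ, hIh]
    calc ∫ l in S, ‖F (k - l)‖ ^ q
        ≤ ∫ l : (EuclideanSpace ℝ (Fin 2)), ‖F (k - l)‖ ^ q :=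
          setIntegral_le_integral (hHq.comp_sub_left k)
            (Filter.Eventually.of_forall fun l => by positivity)
      _ = ∫ y : (EuclideanSpace ℝ (Fin 2)), ‖F y‖ ^ q := integral_sub_left_eq_self (fun y : (EuclideanSpace ℝ (Fin 2)) => ‖F y‖ ^ q) volume k
  have hφint : IntegrableOn φ (Metric.closedBall (0 : (EuclideanSpace ℝ (Fin 2))) kF) := by
    apply Measure.integrableOn_of_bounded measure_closedBall_lt_top.ne
      hφmeas.aestronglyMeasurable (M := Ih)
    exact Filter.Eventually.of_forall fun k =>
      by rw [Real.norm_eq_abs, abs_of_nonneg (hφnonneg k)]; exact hφbdd k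
  -- volume of the annulus
  have hvolA : (volume A).toReal = (kF ^ 2 - (kF - r) ^ 2) * V := by
    have hsub : Metric.ball (0 : (EuclideanSpace ℝ (Fin 2))) (kF - r) ⊆
        Metric.closedBall (0 : (EuclideanSpace ℝ (Fin 2))) kF :=
      Metric.ball_subset_closedBall.trans (Metric.closedBall_subset_closedBall (by linarith))
    have hfr : Module.finrank ℝ (EuclideanSpace ℝ (Fin 2)) = 2 := by simp
    rw [hA, measure_diff hsub measurableSet_ball.nullMeasurableSet measure_ball_lt_top.ne,
      Measure.addHaar_closedBall _ _ hkFpos.le,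
      Measure.addHaar_ball _ _ (by linarith : (0:ℝ) ≤ kF - r), hfr,
      ← ENNReal.sub_mul (fun _ _ => measure_ball_lt_top.ne), ENNReal.toReal_mul,
      ENNReal.toReal_sub_of_le (ENNReal.ofReal_le_ofReal
        (pow_le_pow_left₀ (by linarith) (by linarith) 2)) ENNReal.ofReal_ne_top,
      ENNReal.toReal_ofReal (pow_nonneg hkFpos.le 2),
      ENNReal.toReal_ofReal (pow_nonneg (by linarith : (0:ℝ) ≤ kF - r) 2)]
  -- putting it together
  have hAsub : A ⊆ {k : (EuclideanSpace ℝ (Fin 2)) | ‖k‖ ≤ kF} := by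
    intro k hk
    have := hk.1
    rw [Metric.mem_closedBall, dist_zero_right] at this
    exact this
  have houter : ε ^ q * Vb * (volume A).toReal ≤
      ∫ k in {k : (EuclideanSpace ℝ (Fin 2)) | ‖k‖ ≤ kF}, φ k := by
    calc ε ^ q * Vb * (volume A).toReal
        ≤ ∫ k in A, φ k := by
          have := setIntegral_ge_of_const_le_real hAmeas hAfin key
            (hφint.mono_set (fun k hk => by
              rw [Metric.mem_closedBall, dist_zero_right]; exact hAsub hk))
          rwa [measureReal_def] at this
      _ ≤ ∫ k in {k : (EuclideanSpace ℝ (Fin 2)) | ‖k‖ ≤ kF}, φ k := by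
          apply setIntegral_mono_set
          · apply hφint.mono_set
            intro k hk
            rw [Metric.mem_closedBall, dist_zero_right]
            exact hk
          · exact Filter.Eventually.of_forall fun k => hφnonneg k
          · exact Filter.Eventually.of_forall fun k hk => hAsub hk
  have harea : r * V * kF ≤ (volume A).toReal := by
    rw [hvolA]
    have : kF ^ 2 - (kF - r) ^ 2 = r * (2 * kF - r) := by ring
    rw [this]
    have h10 : kF ≤ 2 * kF - r := by linarith
    have h12 : r * kF ≤ r * (2 * kF - r) := mul_le_mul_of_nonneg_left h10 hrpos.le
    calc r * V * kF = (r * kF) * V := by ring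
      _ ≤ (r * (2 * kF - r)) * V := mul_le_mul_of_nonneg_right h12 hVpos.le
      _ = r * (2 * kF - r) * V := by ring
  calc ε ^ q * Vb * (r * V) * kF = ε ^ q * Vb * (r * V * kF) := by ring
    _ ≤ ε ^ q * Vb * (volume A).toReal := by
        have h11 : (0:ℝ) ≤ ε ^ q * Vb := by positivity
        exact mul_le_mul_of_nonneg_left harea h11
    _ ≤ ∫ k in {k : (EuclideanSpace ℝ (Fin 2)) | ‖k‖ ≤ kF}, φ k := houter
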